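/- (Main Theorem) Let κ be an infinite cardinal and {X_α : α < 2^κ} a family of compact Hausdorff spaces with t₀(X_α) ≤ κ for every α < 2^κ. Then t₀(∏_{α<2^κ} X_α) ≤ κ, i.e., every κ-continuous real-valued function on the product is continuous. -/

import Mathlib

/-!
A `κ`-continuous `f` on `∏ X i` is first shown continuous on every finite face (by induction:
if `t₀(A) ≤ κ` and `Y` is compact, a `κ`-continuous `H` on `A × Y` with continuous slices
gives a `κ`-continuous, hence continuous, map `a ↦ H (a, ·)` into `C(Y, ℝ)`), and then on
every face with `≤ κ` free coordinates, as a uniform limit of finite ones.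
Since `#ι ≤ 2 ^ κ`, the Cantor cube `ι → Bool` has a dense subset of size `≤ κ`, so `f x` is
the limit of `f` at the finite modifications of `w` towards `x`: it suffices to control `f`
near `w` on the σ-product at `w`. There, either points with disjoint supports and large
oscillation lie in one countable face, contradicting its continuity, or finitely many
coordinates `F₀` control `f`; in the latter case a diagonal sequence and one of its cluster
points `u'` give `f u' = f (u' modified to w on F₀)` against the oscillation.
-/

open Cardinal Set Filter Topology Function

universe u

def KappaContinuous {Z : Type u} [TopologicalSpace Z] {E : Type*} [TopologicalSpace E]
    (κ : Cardinal.{u}) (f : Z → E) : Prop :=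
  ∀ B : Set Z, #B ≤ κ → ContinuousOn f B

/-- `t₀(Z) ≤ κ` -/
def FunctionalTightnessLE (Z : Type u) [TopologicalSpace Z] (κ : Cardinal.{u}) : Prop :=
  ∀ g : Z → ℝ, KappaContinuous κ g → Continuous g

variable {κ : Cardinal.{u}}

theorem mk_insert_le_of_le {Z : Type u} (hκ : ℵ₀ ≤ κ) {B : Set Z} (hB : #B ≤ κ) (z : Z) :
    #(insert z B : Set Z) ≤ κ :=
  mk_insert_le.trans <| (add_le_add hB (one_le_aleph0.trans hκ)).trans (add_eq_self hκ).le

theorem mk_finset_le_of_le {α : Type u} (hκ : ℵ₀ ≤ κ) (hα : #α ≤ κ) : #(Finset α) ≤ κ := by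
  rcases finite_or_infinite α with _ | _
  · exact mk_le_aleph0.trans hκ
  · rwa [mk_finset_of_infinite]

section KappaContinuous

variable {Z : Type u} [TopologicalSpace Z] {E : Type*} [TopologicalSpace E] {f : Z → E}

theorem KappaContinuous.comp_continuous {W : Type u} [TopologicalSpace W]
    (hf : KappaContinuous κ f) {g : W → Z} (hg : Continuous g) : KappaContinuous κ (f ∘ g) :=
  fun B hB => (hf _ (mk_image_le.trans hB)).comp hg.continuousOn (mapsTo_image g B)

theorem Continuous.comp_kappaContinuous {F : Type*} [TopologicalSpace F] {g : E → F}
    (hg : Continuous g) (hf : KappaContinuous κ f) : KappaContinuous κ (g ∘ f) :=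
  fun B hB => hg.comp_continuousOn (hf B hB)

theorem KappaContinuous.tendsto_comp (hκ : ℵ₀ ≤ κ) (hf : KappaContinuous κ f) {B : Set Z}
    (hB : #B ≤ κ) {α : Type*} {l : Filter α} {a : α → Z} {z : Z} (ha : Tendsto a l (𝓝 z))
    (haB : ∀ᶠ t in l, a t ∈ B) : Tendsto (f ∘ a) l (𝓝 (f z)) :=
  Tendsto.comp (hf _ (mk_insert_le_of_le hκ hB z) z (mem_insert z B))
    (tendsto_nhdsWithin_iff.2 ⟨ha, haB.mono fun _ => mem_insert_of_mem z⟩)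

theorem KappaContinuous.tendsto_comp_seq (hκ : ℵ₀ ≤ κ) (hf : KappaContinuous κ f)
    {l : Filter ℕ} {a : ℕ → Z} {z : Z} (ha : Tendsto a l (𝓝 z)) : Tendsto (f ∘ a) l (𝓝 (f z)) :=
  hf.tendsto_comp hκ ((le_aleph0_iff_set_countable.2 (countable_range a)).trans hκ) ha
    (Eventually.of_forall mem_range_self)

theorem KappaContinuous.continuous_of_dense [RegularSpace E] (hκ : ℵ₀ ≤ κ)
    (hf : KappaContinuous κ f) {D : Set Z} (hD : Dense D) (hDκ : #D ≤ κ) : Continuous f := by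
  refine continuous_iff_continuousAt.2 fun z =>
    (closed_nhds_basis (f z)).tendsto_right_iff.2 fun V ⟨hV, hVc⟩ => ?_
  have hfD : ∀ y, ContinuousWithinAt f (insert y D) y :=
    fun y => hf _ (mk_insert_le_of_le hκ hDκ y) y (mem_insert y D)
  obtain ⟨U, hUo, hzU, hUV⟩ := mem_nhdsWithin.1 (hfD z hV)
  filter_upwards [hUo.mem_nhds hzU] with y hy
  have hy' : f y ∈ closure (f '' (U ∩ D)) :=
    ((hfD y).mono (inter_subset_right.trans (subset_insert y D))).mem_closure_image
      (hD.open_subset_closure_inter hUo hy)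
  exact hVc.closure_subset_iff.2
    (image_subset_iff.2 fun x hx => hUV ⟨hx.1, mem_insert_of_mem z hx.2⟩) hy'

end KappaContinuous

theorem dense_of_forall_finset_exists_eqOn {ι : Type*} {β : ι → Type*}
    [∀ i, TopologicalSpace (β i)] {D : Set (∀ i, β i)}
    (h : ∀ (σ : ∀ i, β i) (F : Finset ι), ∃ d ∈ D, ∀ i ∈ F, d i = σ i) : Dense D := by
  refine dense_iff_inter_open.2 fun U hU ⟨σ, hσ⟩ => ?_
  obtain ⟨F, t, ht, hFt⟩ := isOpen_pi_iff.1 hU σ hσ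
  obtain ⟨d, hd, hdσ⟩ := h σ F
  exact ⟨d, hFt fun i hi => hdσ i hi ▸ (ht i hi).2, hd⟩

open Classical in
theorem exists_finset_injOn_filter_mem {α ι : Type*} {c : ι → Set α} (hc : Injective c)
    (F : Finset ι) : ∃ s : Finset α, InjOn (fun i => s.filter (· ∈ c i)) F := by
  have hsep : ∀ p ∈ F.offDiag, ∃ x, ¬(x ∈ c p.1 ↔ x ∈ c p.2) := fun p hp => by
    simpa [Set.ext_iff] using hc.ne (Finset.mem_offDiag.1 hp).2.2
  choose sep hsep using hsep
  refine ⟨F.offDiag.attach.image fun p => sep p.1 p.2, fun i hi j hj hij => ?_⟩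
  by_contra hne
  have hp : (i, j) ∈ F.offDiag := Finset.mem_offDiag.2 ⟨hi, hj, hne⟩
  refine hsep _ hp ?_
  have hmem : sep _ hp ∈ F.offDiag.attach.image fun p => sep p.1 p.2 :=
    Finset.mem_image_of_mem _ (Finset.mem_attach _ ⟨_, hp⟩)
  simpa [hmem] using Finset.ext_iff.1 hij (sep _ hp)

open Classical in
/-- Hewitt–Marczewski–Pondiczery for the Cantor cube. -/
theorem exists_dense_mk_le_of_mk_le_two_pow {ι : Type u} (hκ : ℵ₀ ≤ κ) (hι : #ι ≤ 2 ^ κ) :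
    ∃ D : Set (ι → Bool), Dense D ∧ #D ≤ κ := by
  obtain ⟨c⟩ : Nonempty (ι ↪ Set κ.out) := by rwa [← Cardinal.le_def, mk_set, mk_out]
  have : Infinite κ.out := infinite_iff.2 (by rwa [mk_out])
  let code : Finset κ.out × Finset (Finset κ.out) → ι → Bool :=
    fun p i => decide (p.1.filter (· ∈ c i) ∈ p.2)
  refine ⟨range code, dense_of_forall_finset_exists_eqOn fun σ F => ?_, ?_⟩
  · obtain ⟨s, hs⟩ := exists_finset_injOn_filter_mem c.injective F
    refine ⟨_, mem_range_self (s, (F.filter (σ · = true)).image fun i => s.filter (· ∈ c i)),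
      fun i hi => ?_⟩
    have : (∃ j ∈ F, σ j = true ∧ s.filter (· ∈ c j) = s.filter (· ∈ c i)) ↔ σ i = true :=
      ⟨fun ⟨j, hj, hσj, hji⟩ => hs hj hi hji ▸ hσj, fun h => ⟨i, hi, h, rfl⟩⟩
    simp [code, and_assoc, this]
  · calc #(range code) ≤ #(Finset κ.out × Finset (Finset κ.out)) := mk_range_le
      _ = κ := by simp [mk_finset_of_infinite, mul_eq_self hκ]

section TwoFactor

variable {A Y : Type u} [TopologicalSpace A] [TopologicalSpace Y] {E : Type*} [PseudoMetricSpace E]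

theorem FunctionalTightnessLE.continuous_of_kappaContinuous (hA : FunctionalTightnessLE A κ)
    {φ : A → E} (hφ : KappaContinuous κ φ) : Continuous φ := by
  refine continuous_iff_continuousAt.2 fun a => tendsto_iff_dist_tendsto_zero.2 ?_
  have hdist : Continuous fun e : E => dist e (φ a) := continuous_id.dist continuous_const
  simpa [comp_def] using (hA _ (hdist.comp_kappaContinuous hφ)).tendsto a

theorem KappaContinuous.kappaContinuous_curry [CompactSpace Y] (hκ : ℵ₀ ≤ κ) {H : A × Y → E}
    (hH : KappaContinuous κ H) (hslice : ∀ a, Continuous fun y => H (a, y)) :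
    KappaContinuous κ fun a => (⟨fun y => H (a, y), hslice a⟩ : C(Y, E)) := by
  intro S hS a₀ _
  set φ : A → C(Y, E) := fun a => ⟨fun y => H (a, y), hslice a⟩
  by_contra hφ
  obtain ⟨ε, hε, hfar⟩ : ∃ ε > 0, ∃ᶠ a in 𝓝[S] a₀, ε ≤ dist (φ a) (φ a₀) := by
    simpa [ContinuousWithinAt, Metric.tendsto_nhds, not_eventually] using hφ
  set l := 𝓝[S] a₀ ⊓ 𝓟 {a | ε ≤ dist (φ a) (φ a₀)}
  have : l.NeBot := frequently_iff_neBot.1 hfar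
  have hwit : ∀ᶠ a in l, ∃ y, ε / 2 < dist (H (a, y)) (H (a₀, y)) := by
    refine Eventually.filter_mono inf_le_right (eventually_principal.2 fun a ha => ?_)
    by_contra! hle
    exact (half_lt_self hε).not_ge (ha.trans ((ContinuousMap.dist_le (half_pos hε).le).2 hle))
  obtain ⟨ya, hya⟩ := hwit.choice
  let 𝒰 := Ultrafilter.of l
  have h𝒰 : ↑𝒰 ≤ 𝓝[S] a₀ := (Ultrafilter.of_le l).trans inf_le_left
  obtain ⟨y', hy'⟩ : ∃ y', Tendsto ya 𝒰 (𝓝 y') := ⟨_, (𝒰.map ya).le_nhds_lim⟩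
  -- the pairs `(a, ya a)` with `a ∈ S` form a set of size `≤ κ`, on which `H` is continuous
  have h₁ : Tendsto (fun a => H (a, ya a)) 𝒰 (𝓝 (H (a₀, y'))) :=
    hH.tendsto_comp hκ (mk_image_le.trans hS)
      ((tendsto_id'.2 (h𝒰.trans nhdsWithin_le_nhds)).prodMk_nhds hy')
      ((eventually_mem_nhdsWithin.filter_mono h𝒰).mono fun a ha =>
        mem_image_of_mem (fun a => (a, ya a)) ha)
  have h₂ : Tendsto (fun a => H (a₀, ya a)) 𝒰 (𝓝 (H (a₀, y'))) := ((hslice a₀).tendsto y').comp hy'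
  have := ge_of_tendsto (h₁.dist h₂)
    ((hya.filter_mono (Ultrafilter.of_le l)).mono fun a ha => ha.le)
  rw [dist_self] at this
  linarith

theorem FunctionalTightnessLE.continuous_prod_of_kappaContinuous [CompactSpace Y]
    (hκ : ℵ₀ ≤ κ) (hA : FunctionalTightnessLE A κ) {H : A × Y → E} (hH : KappaContinuous κ H)
    (hslice : ∀ a, Continuous fun y => H (a, y)) : Continuous H :=
  continuous_eval.comp
    ((hA.continuous_of_kappaContinuous (hH.kappaContinuous_curry hκ hslice)).prodMap
      continuous_id)

end TwoFactor

theorem exists_seq_forall_tendsto_of_frequently {Z E : Type*} [TopologicalSpace Z]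
    [PseudoMetricSpace E] {w : Z} {p : Z → Prop} (hp : ∃ᶠ z in 𝓝 w, p z) (g : Z → Z → E)
    (hg : ∀ z, ContinuousAt (g z) w) :
    ∃ u : ℕ → Z, (∀ k, p (u k)) ∧
      ∀ j, Tendsto (fun k => g (u j) (u k)) atTop (𝓝 (g (u j) w)) := by
  -- the second component is a level `n`; a point chosen at level `n` is `1/(n+1)`-close to `w`
  -- for all the functions `g z` with `z` chosen before
  obtain ⟨q, hq, hqq⟩ := exists_seq_of_forall_finset_exists (fun q : Z × ℕ => p q.1)
    (fun q q' => q.2 < q'.2 ∧ dist (g q.1 q'.1) (g q.1 w) < 1 / (q'.2 + 1)) fun s _ => by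
      set N := s.sup Prod.snd + 1
      have hnear : ∀ᶠ z in 𝓝 w, ∀ q ∈ s, dist (g q.1 z) (g q.1 w) < 1 / (N + 1) :=
        (eventually_all_finset s).2 fun q _ =>
          (hg q.1).eventually (Metric.ball_mem_nhds _ (by positivity))
      obtain ⟨z, hpz, hz⟩ := (hp.and_eventually hnear).exists
      exact ⟨(z, N), hpz, fun q hq =>
        ⟨Nat.lt_succ_of_le (s.le_sup (f := Prod.snd) hq), hz q hq⟩⟩
  have hmono : StrictMono fun k => (q k).2 := fun a b h => (hqq a b h).1
  refine ⟨fun k => (q k).1, hq, fun j => tendsto_iff_dist_tendsto_zero.2 <|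
    squeeze_zero' (.of_forall fun _ => dist_nonneg) ?_ tendsto_one_div_add_atTop_nhds_zero_nat⟩
  filter_upwards [eventually_gt_atTop j] with k hk
  refine (hqq j k hk).2.le.trans ?_
  gcongr
  exact_mod_cast hmono.id_le k

section Product

variable {ι : Type u} {X : ι → Type u}

def sigmaProduct (w : ∀ i, X i) : Set (∀ i, X i) := {u | {i | u i ≠ w i}.Finite}

theorem Finset.piecewise_mem_sigmaProduct [DecidableEq ι] (F : Finset ι) (x w : ∀ i, X i) :
    F.piecewise x w ∈ sigmaProduct w :=
  F.finite_toSet.subset fun _ hi => by_contra fun hiF => hi (F.piecewise_eq_of_notMem _ _ hiF)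

variable [∀ i, TopologicalSpace (X i)]

theorem KappaContinuous.tendsto_piecewise_atTop [DecidableEq ι] {E : Type*} [TopologicalSpace E]
    [RegularSpace E] (hκ : ℵ₀ ≤ κ) (hι : #ι ≤ 2 ^ κ) {f : (∀ i, X i) → E} (hf : KappaContinuous κ f)
    (x w : ∀ i, X i) : Tendsto (fun F : Finset ι => f (F.piecewise x w)) atTop (𝓝 (f x)) := by
  let Φ : (ι → Bool) → ∀ i, X i := fun s i => if s i then x i else w i
  have hΦ : Continuous Φ := continuous_pi fun i =>
    (continuous_of_discreteTopology (f := fun b : Bool => if b then x i else w i)).comp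
      (continuous_apply i)
  obtain ⟨D, hD, hDκ⟩ := exists_dense_mk_le_of_mk_le_two_pow hκ hι
  have hfΦ : Continuous (f ∘ Φ) := (hf.comp_continuous hΦ).continuous_of_dense hκ hD hDκ
  have hχ : Tendsto (fun F : Finset ι => fun i => decide (i ∈ F)) atTop (𝓝 fun _ => true) :=
    tendsto_pi_nhds.2 fun i => tendsto_const_nhds.congr' <|
      (eventually_ge_atTop {i}).mono fun F hF => by simpa using hF (Finset.mem_singleton_self i)
  have hΦχ : ∀ F : Finset ι, Φ (fun i => decide (i ∈ F)) = F.piecewise x w :=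
    fun F => funext fun i => by simp [Φ, Finset.piecewise]
  have hΦx : Φ (fun _ => true) = x := rfl
  simpa only [comp_def, hΦχ, hΦx] using (hfΦ.tendsto _).comp hχ

theorem Finset.continuous_piecewise {W : Type*} [TopologicalSpace W] (F : Finset ι)
    [∀ j, Decidable (j ∈ F)] {x z : W → ∀ i, X i} (hx : Continuous x) (hz : Continuous z) :
    Continuous fun a => F.piecewise (x a) (z a) :=
  continuous_pi fun i => by
    by_cases hi : i ∈ F
    · simpa [hi] using (continuous_apply i).comp' hx
    · simpa [hi] using (continuous_apply i).comp' hz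

theorem KappaContinuous.continuous_comp_piecewise [DecidableEq ι] [∀ i, CompactSpace (X i)]
    {E : Type*} [PseudoMetricSpace E] (hκ : ℵ₀ ≤ κ) (hX : ∀ i, FunctionalTightnessLE (X i) κ)
    {f : (∀ i, X i) → E} (hf : KappaContinuous κ f) (F : Finset ι) (z : ∀ i, X i) :
    Continuous fun x => f (F.piecewise x z) := by
  induction F using Finset.induction_on generalizing z with
  | empty => simpa using continuous_const
  | insert a F ha ih =>
    let Ψ : X a × (∀ i, X i) → ∀ i, X i := fun p => update (F.piecewise p.2 z) a p.1
    have hΨ : Continuous Ψ :=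
      (F.continuous_piecewise continuous_snd continuous_const).update a continuous_fst
    have hH : Continuous (f ∘ Ψ) :=
      (hX a).continuous_prod_of_kappaContinuous hκ (hf.comp_continuous hΨ) fun p => by
        simpa only [Ψ, comp_def, F.update_piecewise_of_notMem _ _ ha] using ih (update z a p)
    simp only [Finset.piecewise_insert]
    exact hH.comp ((continuous_apply a).prodMk continuous_id)

theorem KappaContinuous.continuousOn_face [DecidableEq ι] [∀ i, CompactSpace (X i)]
    {E : Type*} [PseudoMetricSpace E] (hκ : ℵ₀ ≤ κ) {f : (∀ i, X i) → E}
    (hf : KappaContinuous κ f)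
    (hfaces : ∀ (F : Finset ι) z, Continuous fun x => f (F.piecewise x z))
    {J : Set ι} (hJ : #J ≤ κ) (w : ∀ i, X i) : ContinuousOn f {x | ∀ i ∉ J, x i = w i} := by
  set face := {x : ∀ i, X i | ∀ i ∉ J, x i = w i}
  let ρ : Finset J → (∀ i, X i) → ∀ i, X i :=
    fun F x => (F.map (Embedding.subtype _)).piecewise x w
  refine continuousOn_of_uniform_approx_of_continuousOn fun U hU => ?_
  obtain ⟨ε, hε, hεU⟩ := Metric.mem_uniformity_dist.1 hU
  suffices ∃ F : Finset J, ∀ x ∈ face, dist (f x) (f (ρ F x)) < ε from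
    let ⟨F, hF⟩ := this
    ⟨_, (hfaces _ w).continuousOn, fun x hx => hεU (hF x hx)⟩
  by_contra! h
  choose x hx hxε using h
  let 𝒰 := Ultrafilter.of (atTop : Filter (Finset J))
  obtain ⟨z, hz⟩ : ∃ z, Tendsto x 𝒰 (𝓝 z) := ⟨_, (𝒰.map x).le_nhds_lim⟩
  have hρz : Tendsto (fun F => ρ F (x F)) 𝒰 (𝓝 z) := by
    refine tendsto_pi_nhds.2 fun i => (tendsto_pi_nhds.1 hz i).congr'
      (EventuallyEq.filter_mono ?_ (Ultrafilter.of_le _))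
    by_cases hi : i ∈ J
    · filter_upwards [eventually_ge_atTop {⟨i, hi⟩}] with F hF
      exact (Finset.piecewise_eq_of_mem _ _ _
        (Finset.mem_map_of_mem (Embedding.subtype _) (hF (Finset.mem_singleton_self _)))).symm
    · exact Eventually.of_forall fun F => by
        simp only [ρ]
        rw [Finset.piecewise_eq_of_notMem _ _ _ (by simp [hi]), hx F i hi]
  have hJF := mk_finset_le_of_le hκ hJ
  have hB : #↥(range x ∪ range fun F => ρ F (x F)) ≤ κ := (mk_union_le _ _).trans
    ((add_le_add (mk_range_le.trans hJF) (mk_range_le.trans hJF)).trans (add_eq_self hκ).le)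
  have hlim := (hf.tendsto_comp hκ hB hz (.of_forall fun F => Or.inl (mem_range_self F))).dist
    (hf.tendsto_comp hκ hB hρz (.of_forall fun F => Or.inr (mem_range_self F)))
  rw [dist_self] at hlim
  obtain ⟨F, hF⟩ := (hlim.eventually (gt_mem_nhds hε)).exists
  exact (hxε F).not_gt hF

theorem KappaContinuous.continuousAt_of_continuousWithinAt_sigmaProduct [DecidableEq ι]
    {E : Type*} [TopologicalSpace E] [RegularSpace E] (hκ : ℵ₀ ≤ κ) (hι : #ι ≤ 2 ^ κ)
    {f : (∀ i, X i) → E} (hf : KappaContinuous κ f) {w : ∀ i, X i}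
    (h : ContinuousWithinAt f (sigmaProduct w) w) : ContinuousAt f w := by
  refine (closed_nhds_basis (f w)).tendsto_right_iff.2 fun V ⟨hV, hVc⟩ => ?_
  obtain ⟨U, hU, hUV⟩ := mem_nhdsWithin_iff_exists_mem_nhds_inter.1 (h hV)
  rw [nhds_pi, Filter.mem_pi'] at hU
  obtain ⟨I, t, ht, hIt⟩ := hU
  filter_upwards [set_pi_mem_nhds I.finite_toSet fun i _ => ht i] with x hx
  exact hVc.mem_of_tendsto (hf.tendsto_piecewise_atTop hκ hι x w) <| .of_forall fun F =>
    hUV ⟨hIt (F.piecewise_mem_set_pi hx fun i _ => mem_of_mem_nhds (ht i)),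
      F.piecewise_mem_sigmaProduct x w⟩

theorem exists_finset_forall_dist_lt {E : Type*} [PseudoMetricSpace E] {f : (∀ i, X i) → E}
    {w : ∀ i, X i}
    (hface : ∀ J : Set ι, J.Countable → ContinuousWithinAt f {x | ∀ i ∉ J, x i = w i} w)
    {ε : ℝ} (hε : 0 < ε) :
    ∃ F : Finset ι, ∀ u ∈ sigmaProduct w, (∀ i ∈ F, u i = w i) → dist (f u) (f w) < ε := by
  by_contra! h
  obtain ⟨u, hu, hdisj⟩ := exists_seq_of_forall_finset_exists
    (fun v => v ∈ sigmaProduct w ∧ ε ≤ dist (f v) (f w))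
    (fun v v' => ∀ i, v i ≠ w i → v' i = w i) fun s hs => by
      obtain ⟨v, hv, hvw, hvε⟩ := h (s.finite_toSet.biUnion fun v hv => (hs v hv).1).toFinset
      exact ⟨v, ⟨hv, hvε⟩, fun v' hv' i hi => hvw i (by simpa using ⟨v', hv', hi⟩)⟩
  set J := ⋃ n, {i | u n i ≠ w i}
  have hJ : J.Countable := countable_iUnion fun n => (hu n).1.countable
  -- the supports of the `u n` are pairwise disjoint, so `u n → w`
  have hlim : Tendsto u atTop (𝓝 w) := tendsto_pi_nhds.2 fun i => tendsto_const_nhds.congr' <| by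
    by_cases hi : ∃ m, u m i ≠ w i
    · obtain ⟨m, hm⟩ := hi
      filter_upwards [eventually_gt_atTop m] with n hn using (hdisj m n hn i hm).symm
    · exact .of_forall fun n => (not_exists_not.1 hi n).symm
  have hfu := (hface J hJ).tendsto.comp <| tendsto_nhdsWithin_iff.2
    ⟨hlim, .of_forall fun n i hi => not_not.1 fun hne => hi (mem_iUnion.2 ⟨n, hne⟩)⟩
  obtain ⟨n, hn⟩ := (Metric.tendsto_nhds.1 hfu ε hε).exists
  exact (hu n).2.not_gt hn

theorem KappaContinuous.eventually_dist_lt_two_mul [DecidableEq ι] [∀ i, CompactSpace (X i)]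
    {E : Type*} [MetricSpace E] (hκ : ℵ₀ ≤ κ) {f : (∀ i, X i) → E}
    (hf : KappaContinuous κ f) {F₀ : Finset ι}
    (hF₀ : ∀ z, Continuous fun x => f (F₀.piecewise x z)) {w : ∀ i, X i} {δ : ℝ}
    (hδ : ∀ u ∈ sigmaProduct w, (∀ i ∈ F₀, u i = w i) → dist (f u) (f w) < δ) :
    ∀ᶠ u in 𝓝[sigmaProduct w] w, dist (f u) (f w) < 2 * δ := by
  by_contra h
  rw [not_eventually, frequently_nhdsWithin_iff] at h
  let μ : (∀ i, X i) → (∀ i, X i) → ∀ i, X i := fun z x => F₀.piecewise x z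
  have hgap : ∀ u, ¬dist (f u) (f w) < 2 * δ ∧ u ∈ sigmaProduct w →
      δ < dist (f u) (f (μ u w)) := fun u ⟨hfar, hu⟩ => by
    have hμ : μ u w ∈ sigmaProduct w := hu.subset fun i hi => by
      by_cases hiF : i ∈ F₀ <;> simp_all [μ]
    have := hδ _ hμ fun i hi => F₀.piecewise_eq_of_mem _ _ hi
    linarith [dist_triangle (f u) (f (μ u w)) (f w)]
  obtain ⟨u, hu, hlim⟩ := exists_seq_forall_tendsto_of_frequently h (fun z x => f (μ z x))
    fun z => (hF₀ z).continuousAt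
  let 𝒰 := Ultrafilter.of (atTop : Filter ℕ)
  obtain ⟨u', hu'⟩ : ∃ u', Tendsto u 𝒰 (𝓝 u') := ⟨_, (𝒰.map u).le_nhds_lim⟩
  have hμ_left : ∀ x, Tendsto (fun k => μ (u k) x) 𝒰 (𝓝 (μ u' x)) := fun x =>
    ((F₀.continuous_piecewise continuous_const continuous_id).tendsto u').comp hu'
  -- the continuous maps `f (μ (u j) ·)` cannot tell the cluster point `u'` from `w`
  have hfix : ∀ j, f (μ (u j) u') = f (μ (u j) w) := fun j =>
    tendsto_nhds_unique (((hF₀ (u j)).tendsto u').comp hu')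
      ((hlim j).mono_left (Ultrafilter.of_le _))
  have hu'w : f u' = f (μ u' w) := by
    refine tendsto_nhds_unique ?_ (hf.tendsto_comp_seq hκ (hμ_left w))
    simpa only [comp_def, hfix, μ, F₀.piecewise_same] using hf.tendsto_comp_seq hκ (hμ_left u')
  have hδu' := ge_of_tendsto ((hf.tendsto_comp_seq hκ hu').dist
    (hf.tendsto_comp_seq hκ (hμ_left w))) (.of_forall fun k => (hgap _ (hu k)).le)
  have hδw := hδ w (by simp [sigmaProduct]) fun _ _ => rfl
  rw [hu'w, dist_self] at hδu'
  rw [dist_self] at hδw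
  linarith

theorem FunctionalTightnessLE.pi [∀ i, CompactSpace (X i)] (hκ : ℵ₀ ≤ κ) (hι : #ι ≤ 2 ^ κ)
    (hX : ∀ i, FunctionalTightnessLE (X i) κ) : FunctionalTightnessLE (∀ i, X i) κ := by
  classical
  intro f hf
  have hfaces := hf.continuous_comp_piecewise hκ hX
  refine continuous_iff_continuousAt.2 fun w =>
    hf.continuousAt_of_continuousWithinAt_sigmaProduct hκ hι <| Metric.tendsto_nhds.2 fun ε hε => ?_
  obtain ⟨F₀, hF₀⟩ := exists_finset_forall_dist_lt (f := f) (w := w)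
    (fun J hJ => hf.continuousOn_face hκ hfaces ((le_aleph0_iff_set_countable.2 hJ).trans hκ) w w
      fun _ _ => rfl) (half_pos hε)
  simpa [mul_div_cancel₀] using hf.eventually_dist_lt_two_mul hκ (hfaces F₀) hF₀

end Product

theorem functionalTightness_product_two_pow_general
    (κ : Cardinal.{u}) (hκ : Cardinal.aleph0 ≤ κ)
    {ι : Type u} (hι : #ι = 2 ^ κ)
    {X : ι → Type u} [∀ i, TopologicalSpace (X i)]
    [∀ i, CompactSpace (X i)]
    (ht0 : ∀ i, ∀ g : X i → ℝ,
      (∀ A : Set (X i), #A ≤ κ → Continuous (A.restrict g)) → Continuous g)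
    (f : (∀ i, X i) → ℝ)
    (hkappa : ∀ A : Set (∀ i, X i), #A ≤ κ → Continuous (A.restrict f)) :
    Continuous f :=
  FunctionalTightnessLE.pi hκ hι.le
    (fun i g hg => ht0 i g fun A hA => continuousOn_iff_continuous_domRestrict.1 (hg A hA)) f
    fun A hA => continuousOn_iff_continuous_domRestrict.2 (hkappa A hA)

/-- (Main Theorem) The functional tightness of a product of 2^κ compact Hausdorff
spaces of functional tightness ≤ κ is at most κ. -/
theorem functionalTightness_product_two_pow
    (κ : Cardinal.{u}) (hκ : Cardinal.aleph0 ≤ κ)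
    {ι : Type u} (hι : #ι = 2 ^ κ)
    {X : ι → Type u} [∀ i, TopologicalSpace (X i)]
    [∀ i, CompactSpace (X i)] [∀ i, T2Space (X i)]
    (ht0 : ∀ i, ∀ g : X i → ℝ,
      (∀ A : Set (X i), #A ≤ κ → Continuous (A.restrict g)) → Continuous g)
    (f : (∀ i, X i) → ℝ)
    (hkappa : ∀ A : Set (∀ i, X i), #A ≤ κ → Continuous (A.restrict f)) :
    Continuous f :=
  functionalTightness_product_two_pow_general κ hκ hι ht0 f hkappa
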